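/- arXiv:1602.02342 — 6 statements merged into one kernel-verified Lean document; each statement's English description precedes it below -/
import Mathlib

section
/- Let G be a finite abelian group and let Ĝ denote its group of irreducible characters with values in an algebraically closed field of characteristic 0. For ψ in the group ring ℤĜ, the Stickelberger map Θ(ψ) = Σ_{s∈G} ⟨ψ,s⟩·s lies in ℤG if and only if ψ lies in the kernel A_Ĝ of the determinant map det: ℤĜ → Ĝ given by det(Σ n_χ χ) = Π χ^{n_χ}. Here the Stickelberger pairing is defined by ⟨χ,s⟩ = υ(χ,s)/|s| where υ(χ,s) ∈ {0,1,…,|s|−1} is the unique integer with χ(s) = ζ_{|s|}^{υ(χ,s)} for a fixed compatible system of primitive roots of unity, extended ℚ-bilinearly. -/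
private lemma zpow_finset_sum_aux {α k : Type*} [Field k] {a : k} (ha : a ≠ 0)
    (s : Finset α) (f : α → ℤ) : a ^ (∑ i ∈ s, f i) = ∏ i ∈ s, a ^ f i := by
  induction s using Finset.cons_induction with
  | empty => simp
  | cons x s hx ih => rw [Finset.sum_cons, Finset.prod_cons, zpow_add₀ ha, ih]

/-- (McCulloh, Prop. 4.3.)  Let `G` be a finite abelian group and
`Ĝ = G →* kˣ` its character group, with values in an algebraically closed field `k`
of characteristic `0` equipped with a compatible system `ζ` of primitive roots of
unity.  The Stickelberger pairing is `⟨χ, s⟩ = υ(χ,s)/|s|` where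
`χ s = ζ_{|s|} ^ υ(χ,s)` with `0 ≤ υ(χ,s) < |s|` (encoded by `pair`/`hpair`).
For `ψ ∈ ℤĜ`, the Stickelberger map `Θ(ψ) = Σ_{s ∈ G} ⟨ψ,s⟩·s` has integral
coefficients, i.e. `Θ(ψ) ∈ ℤG`, if and only if `ψ` lies in the kernel `A_Ĝ` of
`det : ℤĜ → Ĝ`, `Σ n_χ χ ↦ Π χ^{n_χ}`. -/
theorem stmt_0 {G k : Type*} [CommGroup G] [Fintype G] [Field k] [IsAlgClosed k]
    [CharZero k]
    (ζ : ℕ → k) (hζ : ∀ n : ℕ, 0 < n → IsPrimitiveRoot (ζ n) n)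
    (hcomp : ∀ m n : ℕ, 0 < m → 0 < n → ζ (m * n) ^ m = ζ n)
    (pair : (G →* kˣ) → G → ℚ)
    (hpair : ∀ (χ : G →* kˣ) (s : G), ∃ υ : ℕ, υ < orderOf s ∧
      (χ s : k) = ζ (orderOf s) ^ υ ∧ pair χ s = (υ : ℚ) / (orderOf s : ℚ))
    (ψ : (G →* kˣ) →₀ ℤ) :
    (∀ s : G, ∃ m : ℤ, ψ.sum (fun χ n => (n : ℚ) * pair χ s) = (m : ℚ)) ↔
      ψ.prod (fun χ n => χ ^ n) = 1 := by
  classical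
  have key : ∀ s : G, (∃ m : ℤ, ψ.sum (fun χ n => (n : ℚ) * pair χ s) = (m : ℚ)) ↔
      (((ψ.prod fun χ n => χ ^ n) s : kˣ) : k) = 1 := by
    intro s
    have hn : 0 < orderOf s := orderOf_pos s
    choose υ hυlt hυeq hυpair using fun χ => hpair χ s
    set n := orderOf s with hndef
    set T : ℤ := ∑ χ ∈ ψ.support, ψ χ * (υ χ : ℤ) with hT
    have hn0 : (n : ℚ) ≠ 0 := by exact_mod_cast hn.ne'
    have hsum : ψ.sum (fun χ c => (c : ℚ) * pair χ s) = (T : ℚ) / n := by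
      rw [Finsupp.sum, hT]
      push_cast
      rw [Finset.sum_div]
      exact Finset.sum_congr rfl fun χ _ => by rw [hυpair χ]; ring
    have hprod : (((ψ.prod fun χ c => χ ^ c) s : kˣ) : k) = ζ n ^ T := by
      rw [Finsupp.prod]
      rw [MonoidHom.finset_prod_apply]
      push_cast
      rw [hT, zpow_finset_sum_aux ((hζ n hn).ne_zero hn.ne')]
      refine Finset.prod_congr rfl fun χ _ => ?_
      have h1 : ((χ ^ ψ χ) s : kˣ) = (χ s) ^ ψ χ := rfl
      rw [h1, Units.val_zpow_eq_zpow_val, hυeq χ,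
        ← zpow_natCast (ζ n) (υ χ), ← zpow_mul, mul_comm]
    rw [hsum, hprod, (hζ n hn).zpow_eq_one_iff_dvd]
    constructor
    · rintro ⟨m, hm⟩
      refine ⟨m, ?_⟩
      have : (T : ℚ) = m * n := by field_simp at hm; exact_mod_cast hm.trans (mul_comm _ _)
      exact_mod_cast this.trans (mul_comm _ _)
    · rintro ⟨m, hm⟩
      exact ⟨m, by rw [hm]; push_cast; field_simp⟩
  simp only [key]
  constructor
  · intro h
    ext s
    rw [h s]; rfl
  · intro h s
    rw [h]; rfl
end

section
/- Let F be a number field or a p-adic field with absolute Galois group Ω_F acting on roots of unity via the cyclotomic character κ: Ω_F → (ℤ/mℤ)^×, where m = exp(G). Let G(−1) denote G with Ω_F-action ω·s := s^{κ(ω^{-1})}, and let Ω_F act on Ĝ canonically via its action on roots of unity. Then the Stickelberger map Θ: ℚĜ → ℚG(−1) is Ω_F-equivariant. -/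
/-- (McCulloh, Prop. 4.5.)  Let `Ω` model the absolute Galois group
`Ω_F`, acting on the field `k` (modelling `F^c`) via `σ : Ω →* (k ≃+* k)`, and let
`κ : Ω →* (ZMod m)ˣ` be the `m`-th cyclotomic character, `m = exp(G)`, so that
`ω ζ = ζ^{κ ω}` for every `m`-th root of unity `ζ`.  `Ω` acts on `Ĝ = G →* kˣ`
canonically and on `G(−1)` by `ω · s = s^{κ(ω⁻¹)}`.  Then the Stickelberger map
`Θ : ℚĜ → ℚG(−1)` is `Ω`-equivariant: for all `ω` and `ψ ∈ ℚĜ`, the coefficient of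
`s` in `Θ(ω·ψ)` equals the coefficient of `s` in `ω·Θ(ψ)`, i.e.
`⟨ω·ψ, s⟩ = ⟨ψ, s^{κ ω}⟩`. -/
theorem stmt_1 {G k Ω : Type*} [CommGroup G] [Fintype G] [Field k] [Group Ω]
    (σ : Ω →* (k ≃+* k))
    (m : ℕ) (hm : m = Monoid.exponent G)
    (ζ : ℕ → k) (hζ : ∀ n : ℕ, 0 < n → IsPrimitiveRoot (ζ n) n)
    (κ : Ω →* (ZMod m)ˣ)
    (hκ : ∀ (ω : Ω) (z : k), z ^ m = 1 → σ ω z = z ^ ((κ ω : ZMod m).val))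
    (pair : (G →* kˣ) → G → ℚ)
    (hpair : ∀ (χ : G →* kˣ) (s : G), ∃ υ : ℕ, υ < orderOf s ∧
      (χ s : k) = ζ (orderOf s) ^ υ ∧ pair χ s = (υ : ℚ) / (orderOf s : ℚ))
    (ψ : (G →* kˣ) →₀ ℚ) (ω : Ω) (s : G) :
    ψ.sum (fun χ n => n * pair ((Units.map ((σ ω : k →+* k)).toMonoidHom).comp χ) s) =
      ψ.sum (fun χ n => n * pair χ (s ^ ((κ ω : ZMod m).val))) := by
  have hm0 : 0 < m := hm ▸ Monoid.exponent_pos.mpr (Monoid.ExponentExists.of_finite)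
  have : NeZero m := ⟨hm0.ne'⟩
  set v := ((κ ω : ZMod m)).val with hv
  refine Finsupp.sum_congr (fun χ _ => ?_)
  congr 1
  -- key pointwise identity
  have hd : 0 < orderOf s := orderOf_pos s
  set d := orderOf s with hdd
  have hdm : d ∣ m := hm ▸ Monoid.order_dvd_exponent s
  have hcop : d.Coprime v := by
    have h := (ZMod.val_coe_unit_coprime (κ ω)).symm
    exact Nat.Coprime.coprime_dvd_left hdm h
  have hord : orderOf (s ^ v) = d := hcop.orderOf_pow
  -- χ s is an m-th root of unity
  have hχm : ((χ s : kˣ) : k) ^ m = 1 := by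
    have : (χ s) ^ m = 1 := by
      rw [← map_pow, hm, Monoid.pow_exponent_eq_one, map_one]
    rw [← Units.val_pow_eq_pow_val, this, Units.val_one]
  obtain ⟨a, halt, hae, hap⟩ := hpair χ (s ^ v)
  obtain ⟨b, hblt, hbe, hbp⟩ := hpair ((Units.map ((σ ω : k →+* k)).toMonoidHom).comp χ) s
  obtain ⟨c, _, hce, _⟩ := hpair χ s
  rw [hord] at halt hae hap
  rw [hap, hbp]
  have hζd := hζ d hd
  have key : ζ d ^ a = ζ d ^ b := by
    have h1 : ((χ (s ^ v) : kˣ) : k) = ζ d ^ (c * v) := by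
      rw [map_pow]
      push_cast
      rw [hce, ← pow_mul]
    have h2 : (((Units.map ((σ ω : k →+* k)).toMonoidHom).comp χ) s : k) = ζ d ^ (c * v) := by
      have h3 : (((Units.map ((σ ω : k →+* k)).toMonoidHom).comp χ) s : k)
          = ((χ s : kˣ) : k) ^ v := hκ ω ((χ s : kˣ) : k) hχm
      rw [hce, ← pow_mul] at h3
      exact h3
    rw [← hae, ← hbe, h1, h2]
  have : a = b := hζd.pow_inj halt (hdd ▸ hblt) key
  rw [this]
end

section
/- Let 1 → N → Γ → Σ → 1 be an extension of groups with Σ acting on an abelian group G, and let N act trivially on G. For h ∈ Hom(N,G) that is Σ-invariant (i.e. γ^{-1}·h(γ̄ ω γ̄^{-1}) = h(ω) for all ω ∈ N and lifts γ̄ ∈ Γ of γ ∈ Σ), the map tr(h): Σ × Σ → G defined by tr(h)(γ,δ) := h(γ̄ δ̄ (γδ)⁻-bar), using a fixed choice of lifts γ̄ ∈ Γ with 1̄ = 1, is a 2-cocycle, and its class in H²(Σ,G) (the transgression of h) is independent of the choice of lifts. -/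
/-- Let `1 → N → Γ → Sg → 1` be a group extension (encoded by a
surjection `π : Γ →* Sg` with `N = ker π`), let the abelian group `G` be an
`Sg`-module (via `φ : Sg →* MulAut G`) on which `N` acts trivially, and let
`h : N → G` be an `Sg`-invariant homomorphism (encoded as a function on `Γ` which is a
homomorphism on `ker π` and satisfies `γ⁻¹ • h(γ̄ ω γ̄⁻¹) = h ω`).  Fixing lifts
`lift γ` of each `γ` with `lift 1 = 1`, the transgression
`tr(h)(γ,δ) = h(lift γ * lift δ * (lift (γδ))⁻¹)` is a 2-cocycle, and its cohomology
class is independent of the choice of lifts. -/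
theorem stmt_4 {G Γ Sg : Type*} [CommGroup G] [Group Γ] [Group Sg]
    (π : Γ →* Sg) (hπ : Function.Surjective π)
    (φ : Sg →* MulAut G)
    (h : Γ → G)
    (hhom : ∀ ω ω' : Γ, π ω = 1 → π ω' = 1 → h (ω * ω') = h ω * h ω')
    (hinv : ∀ (σ ω : Γ), π ω = 1 → (φ (π σ))⁻¹ (h (σ * ω * σ⁻¹)) = h ω)
    (lift : Sg → Γ) (hlift : ∀ γ, π (lift γ) = γ) (hlift1 : lift 1 = 1) :
    -- the transgression is a 2-cocycle
    (∀ γ δ ε : Sg,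
      φ γ (h (lift δ * lift ε * (lift (δ * ε))⁻¹)) *
          h (lift γ * lift (δ * ε) * (lift (γ * (δ * ε)))⁻¹) =
        h (lift γ * lift δ * (lift (γ * δ))⁻¹) *
          h (lift (γ * δ) * lift ε * (lift (γ * δ * ε))⁻¹))
    -- its class does not depend on the choice of lifts
    ∧ ∀ lift' : Sg → Γ, (∀ γ, π (lift' γ) = γ) → lift' 1 = 1 →
        ∃ f : Sg → G, ∀ γ δ,
          h (lift' γ * lift' δ * (lift' (γ * δ))⁻¹) =
            f γ * φ γ (f δ) * (f (γ * δ))⁻¹ * h (lift γ * lift δ * (lift (γ * δ))⁻¹) := by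
  have h1 : h 1 = 1 := by
    have := hhom 1 1 (map_one π) (map_one π)
    rw [mul_one] at this
    exact (left_eq_mul.mp this)
  have hi : ∀ x : Γ, π x = 1 → h x⁻¹ = (h x)⁻¹ := by
    intro x hx
    have := hhom x x⁻¹ hx (by simp [hx])
    rw [mul_inv_cancel, h1] at this
    exact (inv_eq_of_mul_eq_one_right this.symm).symm
  have hconj : ∀ (σ x : Γ), π x = 1 → h (σ * x * σ⁻¹) = φ (π σ) (h x) := by
    intro σ x hx
    calc h (σ * x * σ⁻¹) = φ (π σ) ((φ (π σ))⁻¹ (h (σ * x * σ⁻¹))) := by simp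
    _ = φ (π σ) (h x) := by rw [hinv σ x hx]
  have memP : ∀ α β : Sg, π (lift α * lift β * (lift (α * β))⁻¹) = 1 := by
    intro α β
    rw [map_mul, map_mul, map_inv, hlift, hlift, hlift]
    group
  have memC : ∀ (x : Γ) (s : Sg), π x = 1 → π (lift s * x * (lift s)⁻¹) = 1 := by
    intro x s hx
    rw [map_mul, map_mul, map_inv, hlift, hx]
    group
  have memF : ∀ lift'' : Sg → Γ, (∀ γ, π (lift'' γ) = γ) →
      ∀ α : Sg, π (lift'' α * (lift α)⁻¹) = 1 := by
    intro lift'' hlift'' α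
    rw [map_mul, map_inv, hlift'', hlift]
    group
  constructor
  · intro γ δ ε
    have e1 : φ γ (h (lift δ * lift ε * (lift (δ * ε))⁻¹)) =
        h (lift γ * (lift δ * lift ε * (lift (δ * ε))⁻¹) * (lift γ)⁻¹) := by
      rw [hconj (lift γ) _ (memP δ ε), hlift]
    rw [e1,
      ← hhom (lift γ * (lift δ * lift ε * (lift (δ * ε))⁻¹) * (lift γ)⁻¹)
        (lift γ * lift (δ * ε) * (lift (γ * (δ * ε)))⁻¹)
        (memC _ γ (memP δ ε)) (memP γ (δ * ε)),
      ← hhom (lift γ * lift δ * (lift (γ * δ))⁻¹)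
        (lift (γ * δ) * lift ε * (lift (γ * δ * ε))⁻¹)
        (memP γ δ) (memP (γ * δ) ε)]
    congr 1
    group
  · intro lift' hlift' hlift'1
    refine ⟨fun γ => h (lift' γ * (lift γ)⁻¹), fun γ δ => ?_⟩
    have key : lift' γ * lift' δ * (lift' (γ * δ))⁻¹ =
        (lift' γ * (lift γ)⁻¹) *
          ((lift γ * (lift' δ * (lift δ)⁻¹) * (lift γ)⁻¹) *
            ((lift γ * lift δ * (lift (γ * δ))⁻¹) *
              (lift' (γ * δ) * (lift (γ * δ))⁻¹)⁻¹)) := by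
      group
    rw [key,
      hhom (lift' γ * (lift γ)⁻¹)
        ((lift γ * (lift' δ * (lift δ)⁻¹) * (lift γ)⁻¹) *
          ((lift γ * lift δ * (lift (γ * δ))⁻¹) * (lift' (γ * δ) * (lift (γ * δ))⁻¹)⁻¹))
        (memF lift' hlift' γ)
        (by simp only [map_mul, map_inv, hlift, hlift']; group),
      hhom (lift γ * (lift' δ * (lift δ)⁻¹) * (lift γ)⁻¹)
        ((lift γ * lift δ * (lift (γ * δ))⁻¹) * (lift' (γ * δ) * (lift (γ * δ))⁻¹)⁻¹)
        (memC _ γ (memF lift' hlift' δ))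
        (by simp only [map_mul, map_inv, hlift, hlift']; group),
      hhom (lift γ * lift δ * (lift (γ * δ))⁻¹)
        ((lift' (γ * δ) * (lift (γ * δ))⁻¹)⁻¹)
        (memP γ δ)
        (by simp only [map_mul, map_inv, hlift, hlift']; group),
      hconj (lift γ) (lift' δ * (lift δ)⁻¹) (memF lift' hlift' δ), hlift,
      hi (lift' (γ * δ) * (lift (γ * δ))⁻¹) (memF lift' hlift' (γ * δ))]
    simp [mul_assoc, mul_comm, mul_left_comm]
end

section
/- Let G be a finite abelian group and F a field with Ω_F acting trivially on G. Taking Ω_F-cohomology of the exact sequence 1 → G → (F̄G)^× → (F̄G)^×/G → 1 yields an exact sequence 1 → G → (FG)^× → H(FG) → Hom(Ω_F,G) → 1, where H(FG) := ((F̄G)^×/G)^{Ω_F}; in particular the connecting map δ: H(FG) → Hom(Ω_F,G) is surjective, with δ(r_G(a)G) being the homomorphism ω ↦ r_G(a)^{-1}(ω·r_G(a)). -/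
/-- The coefficientwise action of `Gal(L/F)` on the group algebra `LG`. -/
noncomputable def galAct {F L : Type*} [Field F] [Field L] [Algebra F L]
    {G : Type*} (ω : L ≃ₐ[F] L) (x : MonoidAlgebra L G) : MonoidAlgebra L G :=
  MonoidAlgebra.ofCoeff (Finsupp.mapRange (⇑ω) (map_zero ω) x.coeff)


namespace Stmt10
section PartA
open MonoidAlgebra Finset

variable {F L : Type*} [Field F] [Field L] [Algebra F L] {G : Type*} [CommGroup G]

noncomputable def galHom (ω : L ≃ₐ[F] L) : MonoidAlgebra L G →+* MonoidAlgebra L G :=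
  MonoidAlgebra.liftNCRingHom (MonoidAlgebra.singleOneRingHom.comp ω.toAlgHom.toRingHom)
    (MonoidAlgebra.of L G) fun _ _ => Commute.all _ _

lemma galAct_single (ω : L ≃ₐ[F] L) (g : G) (c : L) :
    galAct ω (MonoidAlgebra.single g c) = MonoidAlgebra.single g (ω c) := by
  simp [galAct, Finsupp.mapRange_single]

lemma galAct_eq_galHom (ω : L ≃ₐ[F] L) (x : MonoidAlgebra L G) : galAct ω x = galHom ω x := by
  induction x using MonoidAlgebra.induction_linear with
  | zero => simp [galAct]
  | add f g hf hg =>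
      rw [map_add, ← hf, ← hg]
      simp only [galAct, MonoidAlgebra.coeff_add, Finsupp.mapRange_add (map_add ω),
        MonoidAlgebra.ofCoeff_add]
  | single g a =>
      rw [galAct_single, galHom, MonoidAlgebra.liftNCRingHom]
      show _ = MonoidAlgebra.liftNC _ _ (MonoidAlgebra.single g a)
      rw [MonoidAlgebra.liftNC_single]
      show _ = MonoidAlgebra.single 1 (ω a) * MonoidAlgebra.single g 1
      rw [MonoidAlgebra.single_mul_single, one_mul, mul_one]

lemma galAct_mul (ω : L ≃ₐ[F] L) (x y : MonoidAlgebra L G) :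
    galAct ω (x * y) = galAct ω x * galAct ω y := by
  simp only [galAct_eq_galHom, map_mul]

lemma galAct_one (ω : L ≃ₐ[F] L) : galAct ω (1 : MonoidAlgebra L G) = 1 := by
  rw [galAct_eq_galHom, map_one]

lemma galAct_sum {ι : Type*} (ω : L ≃ₐ[F] L) (s : Finset ι) (f : ι → MonoidAlgebra L G) :
    galAct ω (∑ i ∈ s, f i) = ∑ i ∈ s, galAct ω (f i) := by
  simp only [galAct_eq_galHom, map_sum]

lemma galAct_mul_apply (ω₁ ω₂ : L ≃ₐ[F] L) (x : MonoidAlgebra L G) :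
    galAct (ω₁ * ω₂) x = galAct ω₁ (galAct ω₂ x) := by
  ext a
  simp [galAct, Finsupp.mapRange_apply]

lemma single_one_sum {ι : Type*} (s : Finset ι) (g : G) (c : ι → L) :
    (∑ i ∈ s, MonoidAlgebra.single g (c i)) = MonoidAlgebra.single g (∑ i ∈ s, c i) :=
  (map_sum (MonoidAlgebra.singleAddHom g) c s).symm

section Resolvent

variable {K : Type*} [Field K] [Algebra F K]

noncomputable def rsv [FiniteDimensional F K] (ι : K →ₐ[F] L) (hb : (K ≃ₐ[F] K) →* G)
    (a : K) : MonoidAlgebra L G :=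
  ∑ σ : K ≃ₐ[F] K, MonoidAlgebra.single ((hb σ)⁻¹) (ι (σ a))

lemma galAct_rsv [FiniteDimensional F K] (ι : K →ₐ[F] L) (hb : (K ≃ₐ[F] K) →* G)
    (res : (L ≃ₐ[F] L) → (K ≃ₐ[F] K)) (hres : ∀ ω x, ω (ι x) = ι (res ω x))
    (a : K) (ω : L ≃ₐ[F] L) :
    galAct ω (rsv ι hb a) = rsv ι hb a * MonoidAlgebra.single (hb (res ω)) 1 := by
  rw [rsv, galAct_sum, Finset.sum_mul]
  refine Fintype.sum_equiv (Equiv.mulLeft (res ω)) _ _ fun σ => ?_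
  rw [galAct_single, hres, Equiv.coe_mulLeft, MonoidAlgebra.single_mul_single, mul_one]
  congr 1
  rw [map_mul]; group

lemma rsv_mul [FiniteDimensional F K] [IsGalois F K] [DecidableEq (K ≃ₐ[F] K)] (ι : K →ₐ[F] L)
    (hb : (K ≃ₐ[F] K) →* G) (a b : K)
    (hab : ∀ ρ : K ≃ₐ[F] K, Algebra.trace F K (a * ρ b) = if ρ = 1 then 1 else 0) :
    rsv ι hb a * (∑ τ : K ≃ₐ[F] K, MonoidAlgebra.single (hb τ) (ι (τ b))) = 1 := by
  classical
  rw [rsv, Finset.sum_mul_sum]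
  have step1 : ∀ σ : K ≃ₐ[F] K,
      (∑ τ : K ≃ₐ[F] K, MonoidAlgebra.single ((hb σ)⁻¹) (ι (σ a)) * MonoidAlgebra.single (hb τ) (ι (τ b)))
      = ∑ ρ : K ≃ₐ[F] K, MonoidAlgebra.single (hb ρ) (ι (σ (a * ρ b))) := by
    intro σ
    refine Fintype.sum_equiv (Equiv.mulLeft σ⁻¹) _ _ fun τ => ?_
    rw [Equiv.coe_mulLeft, MonoidAlgebra.single_mul_single]
    have hcomp : σ ((σ⁻¹ * τ) b) = τ b := by
      rw [← AlgEquiv.mul_apply]; congr 1; group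
    congr 1
    · rw [map_mul, map_inv]
    · rw [map_mul σ, map_mul ι, hcomp]
  simp only [step1]
  rw [Finset.sum_comm]
  have step2 : ∀ ρ : K ≃ₐ[F] K,
      (∑ σ : K ≃ₐ[F] K, MonoidAlgebra.single (hb ρ) (ι (σ (a * ρ b))))
      = MonoidAlgebra.single (hb ρ) (algebraMap F L (if ρ = 1 then 1 else 0)) := by
    intro ρ
    rw [single_one_sum, ← map_sum, ← trace_eq_sum_automorphisms, AlgHom.commutes, hab]
  simp only [step2]
  have step3 : ∀ ρ : K ≃ₐ[F] K,
      MonoidAlgebra.single (hb ρ) (algebraMap F L (if ρ = 1 then 1 else 0))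
      = if ρ = 1 then (1 : MonoidAlgebra L G) else 0 := by
    intro ρ
    split_ifs with h
    · rw [h, map_one, map_one, MonoidAlgebra.one_def]
    · simp
  simp only [step3]
  rw [Finset.sum_ite_eq' Finset.univ (1 : K ≃ₐ[F] K) (fun _ => (1 : MonoidAlgebra L G))]
  simp

lemma isUnit_rsv_charP [FiniteDimensional F K] [IsGalois F K] (p k : ℕ) [Fact p.Prime]
    (hF : CharP F p) (ι : K →ₐ[F] L) (hb : (K ≃ₐ[F] K) →* G)
    (hord : ∀ σ, (hb σ) ^ p ^ k = 1) (a : K) (ha : Algebra.trace F K a = 1) :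
    IsUnit (rsv ι hb a) := by
  haveI : CharP L p := charP_of_injective_algebraMap (algebraMap F L).injective p
  haveI : CharP (MonoidAlgebra L G) p := by
    refine charP_of_injective_algebraMap (R := L) ?_ p
    intro x y hxy
    have : MonoidAlgebra.single (1 : G) x = MonoidAlgebra.single (1 : G) y := hxy
    exact MonoidAlgebra.single_right_injective this
  have hsum1 : (∑ σ : K ≃ₐ[F] K, MonoidAlgebra.single (1 : G) (ι (σ a))) = 1 := by
    rw [single_one_sum, ← map_sum, ← trace_eq_sum_automorphisms, AlgHom.commutes, ha,
      map_one, MonoidAlgebra.one_def]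
  have hterm : ∀ σ : K ≃ₐ[F] K,
      (MonoidAlgebra.single ((hb σ)⁻¹) (1:L) - 1) * MonoidAlgebra.single (1 : G) (ι (σ a))
      = MonoidAlgebra.single ((hb σ)⁻¹) (ι (σ a)) - MonoidAlgebra.single (1 : G) (ι (σ a)) := by
    intro σ
    rw [MonoidAlgebra.one_def, sub_mul, MonoidAlgebra.single_mul_single,
      MonoidAlgebra.single_mul_single, one_mul, mul_one, mul_one]
  have key : rsv ι hb a =
      1 + ∑ σ : K ≃ₐ[F] K, (MonoidAlgebra.single ((hb σ)⁻¹) (1:L) - 1) * MonoidAlgebra.single (1 : G) (ι (σ a)) := by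
    rw [Finset.sum_congr rfl fun σ _ => hterm σ, Finset.sum_sub_distrib, hsum1, rsv]
    ring
  rw [key]
  have hnil : IsNilpotent (∑ σ : K ≃ₐ[F] K,
      (MonoidAlgebra.single ((hb σ)⁻¹) (1:L) - 1) * MonoidAlgebra.single (1 : G) (ι (σ a))) := by
    refine isNilpotent_sum fun σ _ => ?_
    refine (Commute.all _ _).isNilpotent_mul_right ?_
    refine ⟨p ^ k, ?_⟩
    rw [sub_pow_char_pow, MonoidAlgebra.single_pow, one_pow, inv_pow, hord, inv_one, one_pow,
      ← MonoidAlgebra.one_def, sub_self]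
  have := hnil.neg.isUnit_one_sub
  rwa [sub_neg_eq_add] at this

end Resolvent
end PartA

section PartB
open Polynomial

variable {F : Type*} [Field F] {K : Type*} [Field K] [Algebra F K]

section NB
variable [FiniteDimensional F K] [IsGalois F K]

lemma coprime_of_ne [DecidableEq F] {f g : F[X]} (hf : Prime f) (hg : Prime g)
    (hnf : normalize f = f) (hng : normalize g = g) (hne : f ≠ g) : IsCoprime f g := by
  refine (hf.irreducible.coprime_iff_not_dvd).mpr fun hdvd => hne ?_
  have : Associated f g := hf.associated_of_dvd hg hdvd
  rw [← hnf, ← hng]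
  exact normalize_eq_normalize this.dvd this.symm.dvd

lemma prod_dvd_of_forall_dvd [DecidableEq F] {s : Finset F[X]} (hpr : ∀ f ∈ s, Prime f)
    (hnorm : ∀ f ∈ s, normalize f = f) {q : F[X]} (hdvd : ∀ f ∈ s, f ∣ q) :
    (∏ f ∈ s, f) ∣ q := by
  classical
  induction s using Finset.induction with
  | empty => simpa using one_dvd q
  | @insert g s' hg ih =>
      rw [Finset.prod_insert hg]
      have hcop : IsCoprime g (∏ f ∈ s', f) :=
        IsCoprime.prod_right fun f hf =>
          coprime_of_ne (hpr g (Finset.mem_insert_self g s')) (hpr f (Finset.mem_insert_of_mem hf))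
            (hnorm g (Finset.mem_insert_self g s')) (hnorm f (Finset.mem_insert_of_mem hf))
            (fun h => hg (h ▸ hf))
      exact hcop.mul_dvd (hdvd g (Finset.mem_insert_self g s'))
        (ih (fun f hf => hpr f (Finset.mem_insert_of_mem hf))
          (fun f hf => hnorm f (Finset.mem_insert_of_mem hf))
          (fun f hf => hdvd f (Finset.mem_insert_of_mem hf)))

lemma exists_normal_generator (hcyc : IsCyclic (K ≃ₐ[F] K))
    (hm : ((Fintype.card (K ≃ₐ[F] K)) : F) ≠ 0) :
    ∃ a : K, LinearIndependent F fun τ : K ≃ₐ[F] K => τ a := by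
  classical
  set m := Fintype.card (K ≃ₐ[F] K) with hmdef
  obtain ⟨σ₀, hσ₀⟩ := hcyc.exists_generator
  have hord : orderOf σ₀ = m := by
    rw [orderOf_eq_card_of_forall_mem_zpowers hσ₀, Nat.card_eq_fintype_card]
  have hm0 : 0 < m := Fintype.card_pos
  set T : Module.End F K := σ₀.toLinearMap with hTdef
  have hTpow : ∀ i : ℕ, T ^ i = (σ₀ ^ i).toLinearMap := by
    intro i
    induction i with
    | zero => ext x; simp
    | succ n ih =>
        ext x
        rw [pow_succ, pow_succ, Module.End.mul_apply, ih]
        show (σ₀ ^ n) (σ₀ x) = ((σ₀ ^ n) * σ₀) x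
        rw [AlgEquiv.mul_apply]
  -- Dedekind independence of automorphisms
  have dedekind : ∀ q : F[X], q.natDegree < m → Polynomial.aeval T q = 0 → q = 0 := by
    intro q hdeg hq
    have hinj : Function.Injective
        (fun i : Fin m => ((σ₀ ^ (i : ℕ)).toAlgHom.toRingHom.toMonoidHom : K →* K)) := by
      intro i j hij
      have hAE : (σ₀ ^ (i : ℕ)) = σ₀ ^ (j : ℕ) := by
        apply AlgEquiv.ext
        intro x
        exact DFunLike.congr_fun hij x
      exact Fin.ext (pow_injOn_Iio_orderOf (by simpa [hord] using i.2)
        (by simpa [hord] using j.2) hAE)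
    have liK : LinearIndependent K
        (fun i : Fin m => ⇑((σ₀ ^ (i : ℕ)).toAlgHom.toRingHom.toMonoidHom : K →* K)) :=
      (linearIndependent_monoidHom K K).comp _ hinj
    have liF : LinearIndependent F
        (fun i : Fin m => ⇑((σ₀ ^ (i : ℕ)).toAlgHom.toRingHom.toMonoidHom : K →* K)) := by
      refine liK.restrict_scalars ?_
      intro r s h
      simp only [Algebra.smul_def, mul_one] at h
      exact (algebraMap F K).injective h
    have hfun : ∀ i, q.coeff (i : Fin m) = 0 := by
      refine Fintype.linearIndependent_iff.mp liF (fun i => q.coeff i) ?_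
      ext x
      have hx := DFunLike.congr_fun hq x
      rw [aeval_eq_sum_range' hdeg] at hx
      simp only [LinearMap.coe_sum, Finset.sum_apply, LinearMap.smul_apply,
        LinearMap.zero_apply] at hx
      simp only [Finset.sum_apply, Pi.smul_apply, Pi.zero_apply]
      rw [← Fin.sum_univ_eq_sum_range (fun i => q.coeff i • (T ^ i) x) m] at hx
      convert hx using 2 with i
      rw [hTpow]
      rfl
    ext n
    rcases lt_or_ge n m with hn | hn
    · simpa using hfun ⟨n, hn⟩
    · simp [Polynomial.coeff_eq_zero_of_natDegree_lt (lt_of_lt_of_le hdeg hn)]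
  set P : F[X] := X ^ m - C 1 with hPdef
  have hPmonic : P.Monic := monic_X_pow_sub_C 1 hm0.ne'
  have hP0 : P ≠ 0 := hPmonic.ne_zero
  have hPdeg : P.natDegree = m := natDegree_X_pow_sub_C
  have honemap : ((1 : K ≃ₐ[F] K)).toLinearMap = (1 : Module.End F K) := by ext x; simp
  have hPaeval : Polynomial.aeval T P = 0 := by
    rw [hPdef, map_sub, map_pow, aeval_X, aeval_C, map_one, hTpow m]
    have : σ₀ ^ m = 1 := by rw [hmdef]; exact pow_card_eq_one
    rw [this, honemap, sub_self]
  have hsep : P.Separable := by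
    rw [hPdef, map_one]
    exact Polynomial.X_pow_sub_one_separable_iff.mpr hm
  have hsq : Squarefree P := hsep.squarefree
  set NF := UniqueFactorizationMonoid.normalizedFactors P with hNF
  set S : Finset F[X] := NF.toFinset with hSdef
  have hmemS : ∀ f ∈ S, f ∈ NF := fun f hf => Multiset.mem_toFinset.mp hf
  have hSprime : ∀ f ∈ S, Prime f := fun f hf =>
    UniqueFactorizationMonoid.prime_of_normalized_factor f (hmemS f hf)
  have hSnorm : ∀ f ∈ S, normalize f = f := fun f hf =>
    UniqueFactorizationMonoid.normalize_normalized_factor f (hmemS f hf)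
  have hSnodup : NF.Nodup :=
    (UniqueFactorizationMonoid.squarefree_iff_nodup_normalizedFactors hP0).mp hsq
  have hSassoc : Associated (∏ f ∈ S, f) P := by
    have h1 : S.val = NF := by rw [hSdef, Multiset.toFinset_val, Multiset.dedup_eq_self.mpr hSnodup]
    have h2 : (∏ f ∈ S, f) = NF.prod := by
      rw [Finset.prod_eq_multiset_prod, ← h1, Multiset.map_id']
    rw [h2]
    exact UniqueFactorizationMonoid.prod_normalizedFactors hP0
  -- pick kernel elements
  have hker : ∀ f ∈ S, ∃ x : K, x ≠ 0 ∧ Polynomial.aeval T f x = 0 := by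
    intro f hf
    obtain ⟨g, hg⟩ := UniqueFactorizationMonoid.dvd_of_mem_normalizedFactors (hmemS f hf)
    have hf0 : f ≠ 0 := (hSprime f hf).ne_zero
    have hg0 : g ≠ 0 := by rintro rfl; rw [mul_zero] at hg; exact hP0 hg
    have hfdegpos : 0 < f.natDegree := (hSprime f hf).irreducible.natDegree_pos
    have hgdeg : g.natDegree < m := by
      have hPn : P.natDegree = f.natDegree + g.natDegree := by
        rw [hg, Polynomial.natDegree_mul hf0 hg0]
      omega
    have hgne : Polynomial.aeval T g ≠ 0 := fun h => hg0 (dedekind g hgdeg h)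
    obtain ⟨y, hy⟩ := DFunLike.ne_iff.mp hgne
    refine ⟨Polynomial.aeval T g y, hy, ?_⟩
    rw [← Module.End.mul_apply, ← map_mul, ← hg, hPaeval, LinearMap.zero_apply]
  choose xf hxf0 hxfker using hker
  set xfun : F[X] → K := fun f => if h : f ∈ S then xf f h else 0 with hxfun
  have hxfun0 : ∀ f ∈ S, xfun f ≠ 0 := by intro f hf; rw [hxfun]; simpa [hf] using hxf0 f hf
  have hxfunker : ∀ f ∈ S, Polynomial.aeval T f (xfun f) = 0 := by
    intro f hf; rw [hxfun]; simpa [hf] using hxfker f hf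
  set a : K := ∑ f ∈ S, xfun f with ha
  -- the annihilator claim
  have hann : ∀ q : F[X], q.natDegree < m → Polynomial.aeval T q a = 0 → q = 0 := by
    intro q hqdeg hqa
    by_contra hq0
    have hex : ∃ f₀ ∈ S, ¬ f₀ ∣ q := by
      by_contra hall
      push_neg at hall
      have hprod : (∏ f ∈ S, f) ∣ q := prod_dvd_of_forall_dvd hSprime hSnorm hall
      have hPq : P ∣ q := (hSassoc.symm.dvd).trans hprod
      have := Polynomial.natDegree_le_of_dvd hPq hq0
      omega
    obtain ⟨f₀, hf₀S, hf₀q⟩ := hex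
    set R : F[X] := ∏ f ∈ S.erase f₀, f with hR
    have hcop : IsCoprime f₀ (q * R) := by
      refine IsCoprime.mul_right ?_ ?_
      · exact ((hSprime f₀ hf₀S).irreducible.coprime_iff_not_dvd).mpr hf₀q
      · refine IsCoprime.prod_right fun f hf => ?_
        have hfS : f ∈ S := Finset.mem_of_mem_erase hf
        have hne : f₀ ≠ f := fun h => (Finset.mem_erase.mp hf).1 h.symm
        exact coprime_of_ne (hSprime f₀ hf₀S) (hSprime f hfS) (hSnorm f₀ hf₀S) (hSnorm f hfS) hne
    -- aeval (q*R) kills a and all xfun f for f ≠ f₀, hence kills xfun f₀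
    have hkill : ∀ f ∈ S.erase f₀, Polynomial.aeval T (q * R) (xfun f) = 0 := by
      intro f hf
      obtain ⟨R', hR'⟩ := Finset.dvd_prod_of_mem (fun f => f) hf
      rw [show q * R = q * R' * f by rw [hR'] at hR; rw [hR]; ring, map_mul,
        Module.End.mul_apply, hxfunker f (Finset.mem_of_mem_erase hf), map_zero]
    have hkilla : Polynomial.aeval T (q * R) a = 0 := by
      rw [show q * R = R * q by ring, map_mul, Module.End.mul_apply, hqa, map_zero]
    have hx0 : Polynomial.aeval T (q * R) (xfun f₀) = 0 := by
      have hsum : xfun f₀ = a - ∑ f ∈ S.erase f₀, xfun f := by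
        rw [ha, ← Finset.add_sum_erase S xfun hf₀S]; ring
      rw [hsum, map_sub, hkilla, map_sum, Finset.sum_eq_zero hkill, sub_zero]
    obtain ⟨α, β, hαβ⟩ := hcop
    have : xfun f₀ = 0 := by
      have h1 := DFunLike.congr_fun (congrArg (Polynomial.aeval T) hαβ) (xfun f₀)
      rw [map_one, Module.End.one_apply, map_add, LinearMap.add_apply, map_mul, map_mul,
        Module.End.mul_apply, Module.End.mul_apply, hxfunker f₀ hf₀S, map_zero, hx0, map_zero,
        add_zero] at h1
      exact h1.symm
    exact hxfun0 f₀ hf₀S this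
  -- linear independence over Fin m
  have li : LinearIndependent F fun i : Fin m => (σ₀ ^ (i : ℕ)) a := by
    rw [Fintype.linearIndependent_iff]
    intro c hc i
    set q : F[X] := ∑ j : Fin m, C (c j) * X ^ (j : ℕ) with hq
    have hqdeg : q.natDegree < m := by
      refine lt_of_le_of_lt (Polynomial.natDegree_sum_le_of_forall_le _ _ fun j _ => ?_)
        (Nat.sub_lt hm0 one_pos)
      exact le_trans (Polynomial.natDegree_C_mul_X_pow_le (c j) (j : ℕ)) (by omega)
    have hqa : Polynomial.aeval T q a = 0 := by
      have h1 : Polynomial.aeval T q = ∑ j : Fin m, c j • T ^ (j : ℕ) := by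
        rw [hq, map_sum]
        refine Finset.sum_congr rfl fun j _ => ?_
        rw [map_mul, aeval_C, map_pow, aeval_X, Algebra.algebraMap_eq_smul_one, smul_mul_assoc,
          one_mul]
      have h2 : (∑ j : Fin m, c j • T ^ (j : ℕ)) a = ∑ j : Fin m, c j • (σ₀ ^ (j : ℕ)) a := by
        simp only [LinearMap.sum_apply, LinearMap.smul_apply]
        exact Finset.sum_congr rfl fun j _ => by rw [hTpow]; rfl
      rw [h1, h2, hc]
    have hq0 := hann q hqdeg hqa
    have hcoeff : q.coeff (i : ℕ) = c i := by
      rw [hq, Polynomial.finset_sum_coeff]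
      rw [Finset.sum_eq_single i]
      · simp [Polynomial.coeff_C_mul, Polynomial.coeff_X_pow]
      · intro j _ hji
        have hne : (i : ℕ) ≠ (j : ℕ) := fun h => hji (Fin.ext h.symm)
        simp [Polynomial.coeff_C_mul, Polynomial.coeff_X_pow, hne]
      · intro h; exact absurd (Finset.mem_univ i) h
    rw [hq0, Polynomial.coeff_zero] at hcoeff
    exact hcoeff.symm
  have hbij : Function.Bijective (fun i : Fin m => σ₀ ^ (i : ℕ)) := by
    rw [Fintype.bijective_iff_injective_and_card]
    refine ⟨?_, by simp [hmdef]⟩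
    intro i j hij
    exact Fin.ext (pow_injOn_Iio_orderOf (by simpa [hord] using i.2)
      (by simpa [hord] using j.2) hij)
  exact ⟨a, (linearIndependent_equiv (Equiv.ofBijective _ hbij)).mp li⟩

lemma trace_aut (ρ : K ≃ₐ[F] K) (x : K) :
    Algebra.trace F K (ρ x) = Algebra.trace F K x := by
  apply (algebraMap F K).injective
  rw [trace_eq_sum_automorphisms, trace_eq_sum_automorphisms]
  exact Fintype.sum_equiv (Equiv.mulRight ρ) _ _ fun τ => by
    rw [Equiv.coe_mulRight, AlgEquiv.mul_apply]

lemma exists_trace_dual [DecidableEq (K ≃ₐ[F] K)] (hcyc : IsCyclic (K ≃ₐ[F] K))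
    (hm : ((Fintype.card (K ≃ₐ[F] K)) : F) ≠ 0) :
    ∃ a b : K, ∀ ρ : K ≃ₐ[F] K, Algebra.trace F K (a * ρ b) = if ρ = 1 then 1 else 0 := by
  obtain ⟨a, li⟩ := exists_normal_generator hcyc hm
  have hcard : Fintype.card (K ≃ₐ[F] K) = Module.finrank F K := by
    rw [← Nat.card_eq_fintype_card]; exact IsGalois.card_aut_eq_finrank F K
  set Bas : Module.Basis (K ≃ₐ[F] K) F K := basisOfLinearIndependentOfCardEqFinrank li hcard with hBas
  have hBasapp : ∀ τ : K ≃ₐ[F] K, Bas τ = τ a := fun τ =>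
    congrFun (coe_basisOfLinearIndependentOfCardEqFinrank li hcard) τ
  set nd := traceForm_nondegenerate F K
  set b : K := (Algebra.traceForm F K).dualBasis nd Bas 1 with hb
  refine ⟨a, b, fun ρ => ?_⟩
  have h1 : Algebra.trace F K (a * ρ b) = Algebra.trace F K (ρ⁻¹ a * b) := by
    rw [← trace_aut ρ⁻¹ (a * ρ b), map_mul]
    congr 2
    rw [← AlgEquiv.mul_apply, inv_mul_cancel, AlgEquiv.one_apply]
  have h2 := (Algebra.traceForm F K).apply_dualBasis_left nd Bas 1 ρ⁻¹
  rw [Algebra.traceForm_apply, hBasapp, mul_comm] at h2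
  rw [h1, hb, h2]
  by_cases hρ : ρ = 1
  · simp [hρ]
  · have : ρ⁻¹ ≠ 1 := fun h => hρ (by simpa using congrArg (·⁻¹) h)
    simp [hρ, this]

end NB
end PartB

section Assembly
variable {F L : Type*} [Field F] [Field L] [Algebra F L] [IsGalois F L]
  {G : Type*} [CommGroup G]

lemma mult_zmod_pow_eq_one (n : ℕ) (y : Multiplicative (ZMod n)) : y ^ n = 1 := by
  have : (n : ZMod n) * Multiplicative.toAdd y = 0 := by
    rw [ZMod.natCast_self, zero_mul]
  apply Multiplicative.toAdd.injective
  simp [toAdd_pow, nsmul_eq_mul, this]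

lemma key_factor (n p k : ℕ) (hp : p.Prime) (hn : n = p ^ k)
    (h0 : (L ≃ₐ[F] L) →* Multiplicative (ZMod n)) (ψ : Multiplicative (ZMod n) →* G)
    (E₀ : IntermediateField F L) (hE₀fin : FiniteDimensional F E₀)
    (hE₀ : ∀ ω : L ≃ₐ[F] L, (∀ x ∈ E₀, ω x = x) → h0 ω = 1) :
    ∃ u : MonoidAlgebra L G, IsUnit u ∧
      ∀ ω : L ≃ₐ[F] L, galAct ω u = u * MonoidAlgebra.single (ψ (h0 ω)) 1 := by
  classical
  haveI := hE₀fin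
  set E : IntermediateField F L := IntermediateField.normalClosure F E₀ L with hE
  haveI : FiniteDimensional F E := normalClosure.is_finiteDimensional F E₀ L
  set res1 : (L ≃ₐ[F] L) →* (E ≃ₐ[F] E) := AlgEquiv.restrictNormalHom E with hres1def
  have hres1surj : Function.Surjective res1 :=
    AlgEquiv.restrictNormalHom_surjective (F := F) (K₁ := ↥E) L
  have hres1val : ∀ (ω : L ≃ₐ[F] L) (x : E), (E.val) (res1 ω x) = ω (E.val x) := by
    intro ω x
    exact AlgEquiv.restrictNormalHom_apply E ω x
  have hker1 : res1.ker ≤ h0.ker := by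
    intro ω hω
    rw [MonoidHom.mem_ker] at hω ⊢
    apply hE₀
    intro x hx
    have hxE : x ∈ E := IntermediateField.le_normalClosure E₀ hx
    have := hres1val ω ⟨x, hxE⟩
    rw [hω] at this
    simpa using this.symm
  set hbar0 : (E ≃ₐ[F] E) →* Multiplicative (ZMod n) :=
    res1.liftOfRightInverse (Function.surjInv hres1surj)
      (Function.rightInverse_surjInv hres1surj) ⟨h0, hker1⟩ with hhbar0
  have hbar0comp : ∀ ω, hbar0 (res1 ω) = h0 ω := fun ω =>
    res1.liftOfRightInverse_comp_apply _ _ ⟨h0, hker1⟩ ω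
  have hn0 : n ≠ 0 := by rw [hn]; exact (pow_pos hp.pos k).ne'
  haveI : NeZero n := ⟨hn0⟩
  by_cases hchar : ringChar F = p
  · -- Case A : char F = p
    haveI : Fact p.Prime := ⟨hp⟩
    haveI hFp : CharP F p := hchar ▸ ringChar.charP F
    obtain ⟨a, ha⟩ := Algebra.trace_surjective F E 1
    set hb : (E ≃ₐ[F] E) →* G := ψ.comp hbar0 with hhb
    have hord : ∀ σ : E ≃ₐ[F] E, hb σ ^ p ^ k = 1 := by
      intro σ
      rw [← hn, hhb, MonoidHom.comp_apply, ← map_pow, mult_zmod_pow_eq_one, map_one]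
    refine ⟨rsv E.val hb a, isUnit_rsv_charP p k hFp E.val hb hord a ha, ?_⟩
    intro ω
    rw [galAct_rsv E.val hb (fun ω => res1 ω) (fun ω x => (hres1val ω x).symm) a ω]
    rw [hhb, MonoidHom.comp_apply, hbar0comp]
  · -- Case B : char F ≠ p
    set Kker : Subgroup (↥E ≃ₐ[F] ↥E) := hbar0.ker with hKker
    haveI : Kker.Normal := hbar0.normal_ker
    haveI : IsGalois F ↥E := by rw [hE]; exact IsGalois.normalClosure F ↥E₀ L
    set K' : IntermediateField F ↥E := IntermediateField.fixedField Kker with hK'def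
    haveI hGalK' : IsGalois F ↥K' := IsGalois.of_fixedField_normal_subgroup Kker
    have hKkerfix : K'.fixingSubgroup = Kker := IntermediateField.fixingSubgroup_fixedField Kker
    set K₀ : IntermediateField F L := IntermediateField.lift K' with hK₀def
    haveI : FiniteDimensional F ↥K₀ :=
      LinearEquiv.finiteDimensional (IntermediateField.liftAlgEquiv K').toLinearEquiv
    haveI hnormK₀ : Normal F ↥K₀ := Normal.of_algEquiv (IntermediateField.liftAlgEquiv K')
    haveI : IsGalois F ↥K₀ :=
      { to_isSeparable := Algebra.isSeparable_tower_bot_of_isSeparable F ↥K₀ L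
        to_normal := hnormK₀ }
    set res0 : (L ≃ₐ[F] L) →* (↥K₀ ≃ₐ[F] ↥K₀) := AlgEquiv.restrictNormalHom K₀ with hres0def
    have hres0surj : Function.Surjective res0 :=
      AlgEquiv.restrictNormalHom_surjective (F := F) (K₁ := ↥K₀) L
    have hres0val : ∀ (ω : L ≃ₐ[F] L) (x : ↥K₀), (K₀.val) (res0 ω x) = ω (K₀.val x) :=
      fun ω x => AlgEquiv.restrictNormalHom_apply K₀ ω x
    have hfix : ∀ σ : L ≃ₐ[F] L, (∀ x ∈ K₀, σ x = x) ↔ res1 σ ∈ K'.fixingSubgroup := by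
      intro σ
      rw [IntermediateField.mem_fixingSubgroup_iff]
      constructor
      · intro hall y hy
        have hyK₀ : (E.val y) ∈ K₀ := by
          rw [hK₀def]
          exact (IntermediateField.mem_lift y).mpr hy
        have h2 : E.val (res1 σ y) = E.val y := by rw [hres1val]; exact hall _ hyK₀
        exact Subtype.ext h2
      · intro hall x hx
        have hxE : x ∈ E := IntermediateField.lift_le K' (hK₀def ▸ hx)
        have hxK' : (⟨x, hxE⟩ : ↥E) ∈ K' := (IntermediateField.mem_lift ⟨x, hxE⟩).mp (hK₀def ▸ hx)
        have h2 := congrArg E.val (hall ⟨x, hxE⟩ hxK')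
        rw [hres1val] at h2
        exact h2
    have hfixres0 : ∀ σ : L ≃ₐ[F] L, res0 σ = 1 ↔ (∀ x ∈ K₀, σ x = x) := by
      intro σ
      constructor
      · intro hσ x hx
        have h1 : res0 σ ⟨x, hx⟩ = ⟨x, hx⟩ := by rw [hσ]; rfl
        have h2 := congrArg K₀.val h1
        rw [hres0val] at h2
        exact h2
      · intro hall
        apply AlgEquiv.ext
        intro x
        apply Subtype.ext
        have h2 := hres0val σ x
        have h3 : σ (K₀.val x) = K₀.val x := hall _ x.2
        rw [h3] at h2
        exact h2
    have hker0 : res0.ker ≤ h0.ker := by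
      intro σ hσ
      rw [MonoidHom.mem_ker] at hσ ⊢
      have hfix0 : ∀ x ∈ K₀, σ x = x := (hfixres0 σ).mp hσ
      have hmem : res1 σ ∈ Kker := hKkerfix ▸ (hfix σ).mp hfix0
      have h3 : hbar0 (res1 σ) = 1 := MonoidHom.mem_ker.mp hmem
      rw [← hbar0comp σ, h3]
    set hbar' : (↥K₀ ≃ₐ[F] ↥K₀) →* Multiplicative (ZMod n) :=
      res0.liftOfRightInverse (Function.surjInv hres0surj)
        (Function.rightInverse_surjInv hres0surj) ⟨h0, hker0⟩ with hhbar'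
    have hbar'comp : ∀ ω, hbar' (res0 ω) = h0 ω := fun ω =>
      res0.liftOfRightInverse_comp_apply _ _ ⟨h0, hker0⟩ ω
    have hbar'inj : Function.Injective hbar' := by
      rw [← MonoidHom.ker_eq_bot_iff, eq_bot_iff]
      intro γ hγ
      obtain ⟨σ, rfl⟩ := hres0surj γ
      rw [MonoidHom.mem_ker, hbar'comp] at hγ
      have h1 : hbar0 (res1 σ) = 1 := by rw [hbar0comp]; exact hγ
      have h2 : res1 σ ∈ K'.fixingSubgroup := by
        rw [hKkerfix]; exact MonoidHom.mem_ker.mpr h1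
      rw [Subgroup.mem_bot]
      exact (hfixres0 σ).mpr ((hfix σ).mpr h2)
    haveI hcyc' : IsCyclic (↥K₀ ≃ₐ[F] ↥K₀) :=
      isCyclic_of_surjective (MonoidHom.ofInjective hbar'inj).symm
        (MonoidHom.ofInjective hbar'inj).symm.surjective
    have hmF : ((Fintype.card (↥K₀ ≃ₐ[F] ↥K₀)) : F) ≠ 0 := by
      have hdvd : Fintype.card (↥K₀ ≃ₐ[F] ↥K₀) ∣ n := by
        have h1 : Nat.card (↥K₀ ≃ₐ[F] ↥K₀) = Nat.card hbar'.range :=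
          Nat.card_congr (MonoidHom.ofInjective hbar'inj).toEquiv
        have h2 := Subgroup.card_subgroup_dvd_card hbar'.range
        have h3 : Nat.card (Multiplicative (ZMod n)) = n := by
          rw [Nat.card_congr (Multiplicative.toAdd : Multiplicative (ZMod n) ≃ ZMod n),
            Nat.card_zmod]
        rw [← Nat.card_eq_fintype_card, h1]
        rw [h3] at h2
        exact h2
      intro hzero
      have hring : ringChar F ∣ Fintype.card (↥K₀ ≃ₐ[F] ↥K₀) :=
        (CharP.cast_eq_zero_iff F (ringChar F) _).mp hzero
      have hringn : ringChar F ∣ p ^ k := hn ▸ hring.trans hdvd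
      rcases CharP.char_is_prime_or_zero F (ringChar F) with hq | hq
      · exact hchar ((Nat.prime_dvd_prime_iff_eq hq hp).mp (hq.dvd_of_dvd_pow hringn))
      · rw [hq] at hringn
        have : p ^ k = 0 := Nat.eq_zero_of_zero_dvd hringn
        exact (pow_pos hp.pos k).ne' this
    obtain ⟨a, b, hab⟩ := exists_trace_dual (K := ↥K₀) hcyc' hmF
    set hbG : (↥K₀ ≃ₐ[F] ↥K₀) →* G := ψ.comp hbar' with hhbG
    refine ⟨rsv K₀.val hbG a, IsUnit.of_mul_eq_one _ (rsv_mul K₀.val hbG a b hab), ?_⟩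
    intro ω
    rw [galAct_rsv K₀.val hbG (fun ω => res0 ω) (fun ω x => (hres0val ω x).symm) a ω]
    rw [hhbG, MonoidHom.comp_apply, hbar'comp]

end Assembly

end Stmt10


/-- Let `L/F` be Galois (modelling `F̄/F`) with group
`Ω = L ≃ₐ[F] L`, acting trivially on the finite abelian group `G` and
coefficientwise on the group algebra `LG`.  Then taking `Ω`-cohomology of
`1 → G → (LG)ˣ → (LG)ˣ/G → 1` yields an exact sequence
`1 → G → (FG)ˣ → H(FG) → Hom(Ω,G) → 1` where `H(FG) = ((LG)ˣ/G)^Ω`.  Concretely: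
(i) `G → (LG)ˣ`, `s ↦ s`, is injective;
(ii) for an `Ω`-invariant coset `uG` (`u` a unit of `LG`), the connecting map
`δ(uG) : ω ↦ u⁻¹·(ω•u)` takes values in `G` and is a homomorphism;
(iii) `δ` is surjective onto the continuous homomorphisms `Ω →* G` (via the Normal
Basis Theorem and Hilbert 90);
(iv) exactness at `H(FG)`: `δ(uG) = 1` iff `uG` has a representative which is an
`Ω`-invariant unit, i.e. lies in `(FG)ˣ`. -/
theorem stmt_10 {F L G : Type*} [Field F] [Field L] [Algebra F L] [IsGalois F L]
    [CommGroup G] [Fintype G] :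
    -- (i) injectivity of `G → (LG)ˣ`
    (Function.Injective fun s : G => (MonoidAlgebra.single s (1 : L) : MonoidAlgebra L G))
    -- (ii) `δ(uG)` is a homomorphism
    ∧ (∀ u : MonoidAlgebra L G, IsUnit u →
        (∀ ω : L ≃ₐ[F] L, ∃ s : G, galAct ω u = u * MonoidAlgebra.single s 1) →
        ∀ (ω₁ ω₂ : L ≃ₐ[F] L) (s₁ s₂ s₁₂ : G),
          galAct ω₁ u = u * MonoidAlgebra.single s₁ 1 →
          galAct ω₂ u = u * MonoidAlgebra.single s₂ 1 →
          galAct (ω₁ * ω₂) u = u * MonoidAlgebra.single s₁₂ 1 →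
          s₁₂ = s₁ * s₂)
    -- (iii) surjectivity of `δ` : every continuous `h : Ω →* G` arises
    ∧ (∀ h : (L ≃ₐ[F] L) →* G,
        (∃ E : IntermediateField F L, FiniteDimensional F E ∧
          ∀ ω : L ≃ₐ[F] L, (∀ x ∈ E, ω x = x) → h ω = 1) →
        ∃ u : MonoidAlgebra L G, IsUnit u ∧
          ∀ ω : L ≃ₐ[F] L, galAct ω u = u * MonoidAlgebra.single (h ω) 1)
    -- (iv) exactness at `H(FG)`
    ∧ (∀ u : MonoidAlgebra L G, IsUnit u →
        (∀ ω : L ≃ₐ[F] L, galAct ω u = u) →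
        ∃ (v : MonoidAlgebra L G) (s : G), IsUnit v ∧
          (∀ ω : L ≃ₐ[F] L, galAct ω v = v) ∧ u = v * MonoidAlgebra.single s 1) := by
  classical
  refine ⟨?_, ?_, ?_, ?_⟩
  · intro s t hst
    exact MonoidAlgebra.single_left_injective one_ne_zero hst
  · intro u hu _ ω₁ ω₂ s₁ s₂ s₁₂ h1 h2 h12
    have hkey := Stmt10.galAct_mul_apply ω₁ ω₂ u
    rw [h12, h2, Stmt10.galAct_mul, h1, Stmt10.galAct_single, map_one, mul_assoc,
      MonoidAlgebra.single_mul_single, one_mul] at hkey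
    have hc := hu.mul_left_cancel hkey
    exact MonoidAlgebra.single_left_injective one_ne_zero hc
  · rintro h ⟨E₀, hE₀fin, hE₀⟩
    obtain ⟨ιt, hfin, pp, hpp, ee, ⟨φadd⟩⟩ :=
      AddCommGroup.equiv_directSum_zmod_of_finite (Additive G)
    haveI := hfin
    let φ : G ≃* ∀ i, Multiplicative (ZMod (pp i ^ ee i)) :=
      MulEquiv.toAdditive.symm <| φadd.trans <| (DirectSum.addEquivProd _).trans <|
        MulEquiv.toAdditiveRight <| MulEquiv.piMultiplicative _
    have Hfac : ∀ i : ιt, ∃ u : MonoidAlgebra L G, IsUnit u ∧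
        ∀ ω : L ≃ₐ[F] L, galAct ω u = u * MonoidAlgebra.single
          (φ.symm (Pi.mulSingle i (φ (h ω) i))) 1 := by
      intro i
      have hk := Stmt10.key_factor (F := F) (L := L) (G := G) (pp i ^ ee i) (pp i) (ee i)
        (hpp i) rfl
        ((Pi.evalMonoidHom (fun j => Multiplicative (ZMod (pp j ^ ee j))) i).comp
          (φ.toMonoidHom.comp h))
        (φ.symm.toMonoidHom.comp
          (MonoidHom.mulSingle (fun j => Multiplicative (ZMod (pp j ^ ee j))) i))
        E₀ hE₀fin ?_
      · obtain ⟨u, hu, hcoc⟩ := hk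
        refine ⟨u, hu, fun ω => ?_⟩
        have := hcoc ω
        simpa [MonoidHom.comp_apply, Pi.evalMonoidHom_apply, MonoidHom.mulSingle_apply] using this
      · intro ω hω
        have h1 : h ω = 1 := hE₀ ω hω
        simp [h1]
    choose us husunit huscoc using Hfac
    choose ws hws using fun i => (husunit i)
    refine ⟨∏ i, us i, ?_, ?_⟩
    · have hcoe : (∏ i, us i) = ((∏ i, ws i : (MonoidAlgebra L G)ˣ) : MonoidAlgebra L G) := by
        rw [Units.coe_prod]
        exact Finset.prod_congr rfl fun i _ => (hws i).symm
      rw [hcoe]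
      exact Units.isUnit _
    · intro ω
      rw [Stmt10.galAct_eq_galHom, map_prod]
      have hstep : ∀ i : ιt, Stmt10.galHom (G := G) ω (us i)
          = us i * MonoidAlgebra.single (φ.symm (Pi.mulSingle i (φ (h ω) i))) 1 := fun i => by
        rw [← Stmt10.galAct_eq_galHom]; exact huscoc i ω
      rw [Finset.prod_congr rfl fun i _ => hstep i, Finset.prod_mul_distrib]
      have h4 : (∏ i, (MonoidAlgebra.single (φ.symm (Pi.mulSingle i (φ (h ω) i))) (1:L)
            : MonoidAlgebra L G))
          = MonoidAlgebra.single (∏ i, φ.symm (Pi.mulSingle i (φ (h ω) i))) 1 := by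
        simp_rw [← MonoidAlgebra.of_apply (R := L)]
        exact (map_prod (MonoidAlgebra.of L G) _ _).symm
      rw [h4]
      have h5 : (∏ i, φ.symm (Pi.mulSingle i (φ (h ω) i))) = h ω := by
        rw [← map_prod φ.symm _ Finset.univ, Finset.univ_prod_mulSingle]
        exact φ.symm_apply_apply _
      rw [h5]
  · intro u hu hfixed
    exact ⟨u, 1, hu, hfixed, by rw [← MonoidAlgebra.one_def, mul_one]⟩
end

section
/- Let h ∈ Hom(Ω_K^t,G)^Σ be a Σ-invariant tame homomorphism. For each γ ∈ Σ, the map φ_γ: r_G(O_h) → r_G(O_h), r_G(a) ↦ γ̄·r_G(a), is well-defined (i.e. γ̄·r_G(a) is again the resolvend of an element of O_h) and is a semilinear automorphism with grading γ; consequently γ·[O_h] = [O_h] in Cl(O_KG), i.e. gal maps Hom(Ω_K^t,G)^Σ into Cl(O_KG)^Σ. -/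
/-- Abstract form: `Γ = Gal(K^t/k)` acts on the commutative ring
`M = K^t G` by ring automorphisms, `π : Γ →* Sg` is the projection to `Σ = Gal(K/k)`
(so `ker π = Ω_K^t`), `ρ` is the `Σ`-action on `G`, `j : G →* Mˣ` is the inclusion
of the group elements (compatible with the actions: `σ • j s = j (ρ (π σ) s)`), and
`O ⊆ M` is the `Γ`-stable subring modelling `O_{K^t} G`.  The set
`{x | ∀ ω ∈ ker π, ω • x = j (h ω) * x} ∩ O` models the resolvends `r_G(O_h)`.
For a `Σ`-invariant tame `h`, each `σ ∈ Γ` maps this set bijectively onto itself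
(well-definedness of `φ_γ`), i.e. `φ_γ` is a semilinear automorphism with grading
`γ = π σ`; consequently `γ·[O_h] = [O_h]`, so `gal` maps `Hom(Ω_K^t,G)^Σ` into
`Cl(O_KG)^Σ`. -/
theorem stmt_16 {Γ Sg G M : Type*} [Group Γ] [Group Sg] [CommGroup G] [Finite G]
    [CommRing M] [MulSemiringAction Γ M]
    (π : Γ →* Sg) (hπ : Function.Surjective π)
    (ρ : Sg →* MulAut G)
    (h : Γ → G)
    (hhom : ∀ ω ω' : Γ, π ω = 1 → π ω' = 1 → h (ω * ω') = h ω * h ω')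
    (hinv : ∀ (σ ω : Γ), π ω = 1 → (ρ (π σ))⁻¹ (h (σ * ω * σ⁻¹)) = h ω)
    (j : G →* Mˣ)
    (hj : ∀ (σ : Γ) (s : G), σ • (j s : M) = (j (ρ (π σ) s) : M))
    (O : Subring M) (hO : ∀ σ : Γ, ∀ x ∈ O, σ • x ∈ O) :
    ∀ σ : Γ, Set.BijOn (fun x : M => σ • x)
      ({x : M | ∀ ω : Γ, π ω = 1 → ω • x = (j (h ω) : M) * x} ∩ (O : Set M))
      ({x : M | ∀ ω : Γ, π ω = 1 → ω • x = (j (h ω) : M) * x} ∩ (O : Set M)) := by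
  set S : Set M := {x : M | ∀ ω : Γ, π ω = 1 → ω • x = (j (h ω) : M) * x} ∩ (O : Set M)
    with hS
  have key : ∀ σ : Γ, Set.MapsTo (fun x : M => σ • x) S S := by
    intro σ x hx
    obtain ⟨hx1, hx2⟩ := hx
    refine ⟨?_, hO σ x hx2⟩
    intro ω hω
    have hker : π (σ⁻¹ * ω * σ) = 1 := by
      simp [map_mul, hω]
    have h1 : ω • (σ • x) = σ • ((σ⁻¹ * ω * σ) • x) := by
      rw [← mul_smul, ← mul_smul]
      congr 1
      group
    have := hinv σ (σ⁻¹ * ω * σ) hker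
    have h2 : σ * (σ⁻¹ * ω * σ) * σ⁻¹ = ω := by group
    rw [h2] at this
    have h3 : ρ (π σ) (h (σ⁻¹ * ω * σ)) = h ω := by
      rw [← this]; simp
    rw [h1, hx1 _ hker, smul_mul', hj, h3]
  intro σ
  refine ⟨key σ, ?_, ?_⟩
  · intro a _ b _ hab
    exact smul_left_cancel σ hab
  · intro y hy
    exact ⟨σ⁻¹ • y, key σ⁻¹ hy, smul_inv_smul σ y⟩
end

section
/- Under the hypotheses of the main theorem (K/k Galois with group Σ acting trivially on the finite abelian group G, k containing all exp(G)-th roots of unity, V the set of primes of O_K ramified over k): if h, h₁, h₂ ∈ Hom(Ω_K^t,G)^Σ_V, then (a) cl(O_{h₁})cl(O_{h₂}) = cl(O_{h₁h₂h_s}) for some h_s ∈ Hom(Ω_K^t,G)^Σ_V with tr(h_s) = 1; (b) cl(O_h)cl(O_{h^{-1}}) ≡ 1 mod R_s(O_KG)_V; (c) if tr(h₁) = tr(h₂) then cl(O_{h₁}) ≡ cl(O_{h₂}) mod R_s(O_KG)_V. -/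
/-- Abstract form of Proposition 4.4 (the hypotheses of
Theorem 1.6 are encoded as follows): `H` is the group `Hom(Ω_K^t,G)^Σ_V`,
`Cl` the class group `Cl(O_KG)`, `T = H²(Σ,G)`, `tr` the transgression,
`cl h = cl(O_h)`, and `d h ⊆ P` (`P` = the primes of `O_K`) is the finite
ramification set of `h`.  The key inputs are weak multiplicativity of `gal`
(`hweak`) and the approximation theorem (`happrox`, Theorem 1.6(a)).  Then:
(a) `cl h₁ * cl h₂ = cl (h₁ h₂ h_s)` for some `h_s` with `tr h_s = 1`;
(b) `cl h * cl h⁻¹ ≡ 1 (mod R_s(O_KG)_V)`;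
(c) if `tr h₁ = tr h₂` then `cl h₁ ≡ cl h₂ (mod R_s(O_KG)_V)`. -/
theorem stmt_17 {H Cl T P : Type*} [CommGroup H] [CommGroup Cl] [CommGroup T]
    (tr : H →* T) (cl : H → Cl) (d : H → Set P)
    (hfin : ∀ h : H, (d h).Finite)
    (hweak : ∀ h₁ h₂ : H, Disjoint (d h₁) (d h₂) → cl (h₁ * h₂) = cl h₁ * cl h₂)
    (happrox : ∀ (h : H) (S : Set P), S.Finite →
      ∃ h' : H, cl h' = cl h ∧ tr h' = tr h ∧ Disjoint (d h') S) :
    (∀ h₁ h₂ : H, ∃ hs : H, tr hs = 1 ∧ cl h₁ * cl h₂ = cl (h₁ * h₂ * hs))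
    ∧ (∀ h : H, ∃ hs : H, tr hs = 1 ∧ cl h * cl h⁻¹ = cl hs)
    ∧ (∀ h₁ h₂ : H, tr h₁ = tr h₂ →
        ∃ hs hs' : H, tr hs = 1 ∧ tr hs' = 1 ∧ cl h₁ * cl hs = cl h₂ * cl hs') := by
  have partA : ∀ h₁ h₂ : H, ∃ hs : H, tr hs = 1 ∧ cl h₁ * cl h₂ = cl (h₁ * h₂ * hs) := by
    intro h₁ h₂
    obtain ⟨h', hcl, htr, hdisj⟩ := happrox h₂ (d h₁) (hfin h₁)
    refine ⟨h' * h₂⁻¹, by simp [htr], ?_⟩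
    have : h₁ * h₂ * (h' * h₂⁻¹) = h₁ * h' := by
      rw [mul_comm h' h₂⁻¹, ← mul_assoc, mul_inv_cancel_right]
    rw [this, hweak h₁ h' hdisj.symm, hcl]
  have partB : ∀ h : H, ∃ hs : H, tr hs = 1 ∧ cl h * cl h⁻¹ = cl hs := by
    intro h
    obtain ⟨h', hcl, htr, hdisj⟩ := happrox h⁻¹ (d h) (hfin h)
    refine ⟨h * h', by simp [htr], ?_⟩
    rw [hweak h h' hdisj.symm, hcl]
  refine ⟨partA, partB, fun h₁ h₂ heq => ?_⟩
  obtain ⟨hs0, htr0, hcl0⟩ := partA h₁ h₂⁻¹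
  obtain ⟨hs1, htr1, hcl1⟩ := partB h₂
  refine ⟨hs1, h₁ * h₂⁻¹ * hs0, htr1, by simp [htr0, heq], ?_⟩
  rw [← hcl0, ← hcl1]; exact mul_left_comm _ _ _
end
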